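/- arXiv:1412.7388 — 8 statements merged into one kernel-verified Lean document; each statement's English description precedes it below -/
import Mathlib

section
/- Let A be a real symmetric n×n matrix with spectral decomposition A = U Λ Uᵀ, X = e^{Λ/2} Uᵀ, and let x_p denote the p-th column of X. Define ξ_{pq}² = (e^A)_{pp} + (e^A)_{qq} − 2(e^A)_{pq}. Then ξ_{pq}² = ‖x_p − x_q‖², the squared Euclidean distance between x_p and x_q; consequently ξ_{pq} = √((e^A)_{pp} + (e^A)_{qq} − 2(e^A)_{pq}) is nonnegative, symmetric, and satisfies the triangle inequality ξ_{pr} ≤ ξ_{pq} + ξ_{qr} for all indices p, q, r. -/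
/-! Since `D` is symmetric, `e^A = U e^{D/2} e^{D/2} Uᵀ = Xᵀ X` is a Gram matrix, so `ξ_{pq}²`
is the squared Euclidean distance between the columns `x_p` and `x_q` of `X`, and `ξ` inherits
the metric axioms of `EuclideanSpace`. -/

open Matrix

namespace Matrix

variable {m n : Type*} [Fintype m]

open NormedSpace in
theorem exp_conj_of_mul_transpose_eq_one [Fintype n] [DecidableEq n] {𝔸 : Type*}
    [NormedCommRing 𝔸] [NormedAlgebra ℚ 𝔸] [CompleteSpace 𝔸] {U : Matrix n n 𝔸} (hU : U * Uᵀ = 1)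
    (D : Matrix n n 𝔸) :
    exp (U * D * Uᵀ) = U * exp D * Uᵀ := by
  rw [← inv_eq_right_inv hU, exp_conj U D (IsUnit.of_mul_eq_one Uᵀ hU)]

open NormedSpace in
theorem exp_eq_transpose_mul_self_of_isSymm [Fintype n] [DecidableEq n] {D : Matrix n n ℝ}
    (hD : D.IsSymm) :
    exp D = (exp ((1 / 2 : ℝ) • D))ᵀ * exp ((1 / 2 : ℝ) • D) := by
  rw [← exp_transpose, (hD.smul _).eq, ← exp_add_of_commute _ _ (Commute.refl _), ← add_smul]
  norm_num

theorem transpose_mul_self_apply_add_sub {R : Type*} [CommRing R] (X : Matrix m n R) (p q : n) :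
    (Xᵀ * X) p p + (Xᵀ * X) q q - 2 * (Xᵀ * X) p q = ∑ i, (X i p - X i q) ^ 2 := by
  simp only [mul_apply, transpose_apply, Finset.mul_sum, ← Finset.sum_add_distrib,
    ← Finset.sum_sub_distrib]
  exact Finset.sum_congr rfl fun i _ => by ring

theorem sqrt_sum_sq_sub_eq_dist_col (X : Matrix m n ℝ) (p q : n) :
    √(∑ i, (X i p - X i q) ^ 2) = dist (WithLp.toLp 2 (Xᵀ p)) (WithLp.toLp 2 (Xᵀ q)) := by
  simp [EuclideanSpace.dist_eq, Real.dist_eq, sq_abs]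

end Matrix

theorem communicability_distance_eq_euclidean_general
    (n : ℕ) (A U D : Matrix (Fin n) (Fin n) ℝ)
    (hD : D.IsDiag)
    (hU : U * Uᵀ = 1)
    (hdecomp : A = U * D * Uᵀ)
    (X : Matrix (Fin n) (Fin n) ℝ)
    (hX : X = NormedSpace.exp ((1 / 2 : ℝ) • D) * Uᵀ)
    (ξ : Fin n → Fin n → ℝ)
    (hξ : ∀ p q, ξ p q = Real.sqrt (NormedSpace.exp A p p + NormedSpace.exp A q q
        - 2 * NormedSpace.exp A p q)) :
    (∀ p q, NormedSpace.exp A p p + NormedSpace.exp A q q - 2 * NormedSpace.exp A p q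
        = ∑ i, (X i p - X i q) ^ 2) ∧
    (∀ p q, 0 ≤ ξ p q) ∧
    (∀ p q, ξ p q = ξ q p) ∧
    (∀ p q r, ξ p r ≤ ξ p q + ξ q r) := by
  have hgram : NormedSpace.exp A = Xᵀ * X := by
    rw [hdecomp, exp_conj_of_mul_transpose_eq_one hU,
      exp_eq_transpose_mul_self_of_isSymm hD.isSymm, hX, transpose_mul, transpose_transpose]
    simp only [Matrix.mul_assoc]
  have hsq : ∀ p q, NormedSpace.exp A p p + NormedSpace.exp A q q - 2 * NormedSpace.exp A p q
      = ∑ i, (X i p - X i q) ^ 2 := by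
    rw [hgram]
    exact transpose_mul_self_apply_add_sub X
  set x : Fin n → EuclideanSpace ℝ (Fin n) := fun p => WithLp.toLp 2 (Xᵀ p)
  have hdist : ∀ p q, ξ p q = dist (x p) (x q) := fun p q => by
    rw [hξ, hsq, sqrt_sum_sq_sub_eq_dist_col]
  refine ⟨hsq, fun p q => ?_, fun p q => ?_, fun p q r => ?_⟩
  · exact hdist p q ▸ dist_nonneg
  · rw [hdist, hdist, dist_comm]
  · simpa only [hdist] using dist_triangle (x p) (x q) (x r)

/-- With `A = U D Uᵀ` a spectral decomposition of a real symmetric matrix,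
`X = e^{D/2} Uᵀ` with columns `x_p`, and `ξ_{pq}² = (e^A)_{pp} + (e^A)_{qq} − 2(e^A)_{pq}`,
one has `ξ_{pq}² = ‖x_p − x_q‖²`; consequently `ξ` is nonnegative, symmetric and satisfies
the triangle inequality. -/
theorem communicability_distance_eq_euclidean
    (n : ℕ) (A U D : Matrix (Fin n) (Fin n) ℝ)
    (hA : A.IsSymm) (hD : D.IsDiag)
    (hU : U * Uᵀ = 1) (hU' : Uᵀ * U = 1)
    (hdecomp : A = U * D * Uᵀ)
    (X : Matrix (Fin n) (Fin n) ℝ)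
    (hX : X = NormedSpace.exp ((1 / 2 : ℝ) • D) * Uᵀ)
    (ξ : Fin n → Fin n → ℝ)
    (hξ : ∀ p q, ξ p q = Real.sqrt (NormedSpace.exp A p p + NormedSpace.exp A q q
        - 2 * NormedSpace.exp A p q)) :
    (∀ p q, NormedSpace.exp A p p + NormedSpace.exp A q q - 2 * NormedSpace.exp A p q
        = ∑ i, (X i p - X i q) ^ 2) ∧
    (∀ p q, 0 ≤ ξ p q) ∧
    (∀ p q, ξ p q = ξ q p) ∧
    (∀ p q r, ξ p r ≤ ξ p q + ξ q r) :=
  communicability_distance_eq_euclidean_general n A U D hD hU hdecomp X hX ξ hξ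
end

section
/- Let A be the adjacency matrix of a simple connected graph on n vertices, with spectral decomposition A = U Λ Uᵀ, X = e^{Λ/2} Uᵀ, and x_p the p-th column of X. Let s ∈ ℝⁿ be the vector with entries s_p = (e^A)_{pp}, let 1 be the all-ones vector, and set a = 1ᵀ e^{−A} 1, b = sᵀ e^{−A} 1, c = sᵀ e^{−A} s. Then a > 0, the quantity R² = (c − (2 − b)²/a)/4 is nonnegative, and there exists a point x₀ ∈ ℝⁿ such that ‖x_p − x₀‖² = R² for every vertex p; that is, all points x_p lie on a hypersphere of radius R = √(R²). -/
/-!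
The columns of `X` realise `e^A` as a Gram matrix: `Xᵀ X = U e^{D/2} e^{D/2} Uᵀ = e^A`. For any
Gram matrix `E = Xᵀ X` with inverse `F` (here `F = e^{-A}`), the point `x₀ = X F v` satisfies
`⟨x_p, x₀⟩ = v_p` and `‖x₀‖² = vᵀ F v`, so `‖x_p - x₀‖² = s_p - 2 v_p + vᵀ F v`. Choosing
`v = (s + α 1) / 2` makes this independent of `p`, and `α = (2 - b) / a` turns the constant into
`(c - (2 - b)² / a) / 4`. The identity `vᵀ F v = ‖X F v‖²` also shows that `F` is positive
definite, whence `a > 0`.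
-/

open Matrix NormedSpace

section Gram

variable {m ι : Type*} [Fintype m] [Fintype ι] [DecidableEq ι] {X : Matrix m ι ℝ}
  {F : Matrix ι ι ℝ}

theorem transpose_eq_self_of_transpose_mul_self_mul_eq_one (hXF : Xᵀ * X * F = 1) : Fᵀ = F :=
  calc Fᵀ = Fᵀ * (Xᵀ * X * F) := by rw [hXF, Matrix.mul_one]
    _ = (Xᵀ * X * F)ᵀ * F := by simp only [transpose_mul, transpose_transpose, Matrix.mul_assoc]
    _ = F := by rw [hXF, transpose_one, Matrix.one_mul]

theorem transpose_mulVec_mulVec_mulVec_of_mul_eq_one (hXF : Xᵀ * X * F = 1) (v : ι → ℝ) :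
    Xᵀ *ᵥ X *ᵥ F *ᵥ v = v := by
  rw [mulVec_mulVec, mulVec_mulVec, hXF, one_mulVec]

theorem mulVec_mulVec_dotProduct_self (hXF : Xᵀ * X * F = 1) (v : ι → ℝ) :
    (X *ᵥ F *ᵥ v) ⬝ᵥ (X *ᵥ F *ᵥ v) = v ⬝ᵥ F *ᵥ v := by
  rw [dotProduct_mulVec, ← mulVec_transpose, transpose_mulVec_mulVec_mulVec_of_mul_eq_one hXF]

theorem posDef_of_transpose_mul_self_mul_eq_one (hXF : Xᵀ * X * F = 1) : F.PosDef := by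
  refine .of_dotProduct_mulVec_pos (transpose_eq_self_of_transpose_mul_self_mul_eq_one hXF)
    fun v hv => ?_
  rw [star_trivial, ← mulVec_mulVec_dotProduct_self hXF]
  refine lt_of_le_of_ne (by simpa using dotProduct_star_self_nonneg (X *ᵥ F *ᵥ v)) ?_
  intro h
  apply hv
  rw [← transpose_mulVec_mulVec_mulVec_of_mul_eq_one hXF v, dotProduct_self_eq_zero.mp h.symm,
    mulVec_zero]

theorem sum_sq_sub_mulVec_mulVec (hXF : Xᵀ * X * F = 1) (v : ι → ℝ) (p : ι) :
    ∑ i, (X i p - (X *ᵥ F *ᵥ v) i) ^ 2 = (Xᵀ * X) p p - 2 * v p + v ⬝ᵥ F *ᵥ v := by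
  have hcross : (fun i => X i p) ⬝ᵥ (X *ᵥ F *ᵥ v) = v p := by
    simpa only [mulVec, transpose_apply] using
      congrFun (transpose_mulVec_mulVec_mulVec_of_mul_eq_one hXF v) p
  have hdiag : (fun i => X i p) ⬝ᵥ (fun i => X i p) = (Xᵀ * X) p p := by rw [mul_apply']; rfl
  have hsplit : ∑ i, (X i p - (X *ᵥ F *ᵥ v) i) ^ 2 = (fun i => X i p) ⬝ᵥ (fun i => X i p)
      - 2 * (fun i => X i p) ⬝ᵥ (X *ᵥ F *ᵥ v) + (X *ᵥ F *ᵥ v) ⬝ᵥ (X *ᵥ F *ᵥ v) := by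
    simp only [dotProduct, Finset.mul_sum, ← Finset.sum_sub_distrib, ← Finset.sum_add_distrib]
    exact Finset.sum_congr rfl fun i _ => by ring
  rw [hsplit, hdiag, hcross, mulVec_mulVec_dotProduct_self hXF v]

theorem exists_center_sum_sq_sub_eq (hXF : Xᵀ * X * F = 1) {s : ι → ℝ} (hs : (Xᵀ * X).diag = s)
    (ha : 1 ⬝ᵥ F *ᵥ 1 ≠ 0) :
    ∃ x₀ : m → ℝ, ∀ p, ∑ i, (X i p - x₀ i) ^ 2 =
      (s ⬝ᵥ F *ᵥ s - (2 - s ⬝ᵥ F *ᵥ 1) ^ 2 / (1 ⬝ᵥ F *ᵥ 1)) / 4 := by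
  set α := (2 - s ⬝ᵥ F *ᵥ 1) / (1 ⬝ᵥ F *ᵥ 1) with hα
  refine ⟨X *ᵥ F *ᵥ ((1 / 2 : ℝ) • (s + α • 1)), fun p => ?_⟩
  have hsymm : 1 ⬝ᵥ F *ᵥ s = s ⬝ᵥ F *ᵥ 1 := by
    rw [dotProduct_mulVec, ← mulVec_transpose,
      transpose_eq_self_of_transpose_mul_self_mul_eq_one hXF, dotProduct_comm]
  rw [sum_sq_sub_mulVec_mulVec hXF, show (Xᵀ * X) p p = s p from congrFun hs p]
  simp only [mulVec_smul, mulVec_add, dotProduct_smul, smul_dotProduct, dotProduct_add,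
    add_dotProduct, hsymm, Pi.smul_apply, Pi.add_apply, Pi.one_apply, smul_eq_mul]
  rw [hα]
  field_simp
  ring

end Gram

theorem transpose_mul_self_exp_half_smul_mul_transpose {n : Type*} [Fintype n] [DecidableEq n]
    {U D : Matrix n n ℝ} (hD : D.IsSymm) (hU : Uᵀ * U = 1) :
    (exp ((1 / 2 : ℝ) • D) * Uᵀ)ᵀ * (exp ((1 / 2 : ℝ) • D) * Uᵀ) = exp (U * D * Uᵀ) := by
  have hsq : exp ((1 / 2 : ℝ) • D) * exp ((1 / 2 : ℝ) • D) = exp D := by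
    rw [← exp_add_of_commute _ _ (.refl _), ← add_smul]
    norm_num
  calc (exp ((1 / 2 : ℝ) • D) * Uᵀ)ᵀ * (exp ((1 / 2 : ℝ) • D) * Uᵀ)
        = U * (exp ((1 / 2 : ℝ) • D) * exp ((1 / 2 : ℝ) • D)) * Uᵀ := by
          rw [transpose_mul, transpose_transpose, ← exp_transpose, transpose_smul, hD.eq]
          simp only [Matrix.mul_assoc]
    _ = U * exp D * U⁻¹ := by rw [hsq, inv_eq_left_inv hU]
    _ = exp (U * D * Uᵀ) := by rw [← exp_conj U D (.of_mul_eq_one_right _ hU), inv_eq_left_inv hU]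

theorem hyperspherical_embedding_general
    (n : ℕ) (G : SimpleGraph (Fin n)) (hconn : G.Connected)
    (A U D : Matrix (Fin n) (Fin n) ℝ)
    (hD : D.IsDiag) (hU' : Uᵀ * U = 1)
    (hdecomp : A = U * D * Uᵀ)
    (X : Matrix (Fin n) (Fin n) ℝ)
    (hX : X = NormedSpace.exp ((1 / 2 : ℝ) • D) * Uᵀ)
    (s : Fin n → ℝ) (hs : ∀ p, s p = NormedSpace.exp A p p)
    (a b c : ℝ)
    (ha : a = ∑ p, ∑ q, NormedSpace.exp (-A) p q)
    (hb : b = ∑ p, ∑ q, s p * NormedSpace.exp (-A) p q)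
    (hc : c = ∑ p, ∑ q, s p * NormedSpace.exp (-A) p q * s q) :
    0 < a ∧
    0 ≤ (c - (2 - b) ^ 2 / a) / 4 ∧
    ∃ x₀ : Fin n → ℝ, ∀ p, ∑ i, (X i p - x₀ i) ^ 2 = (c - (2 - b) ^ 2 / a) / 4 := by
  have hgram : Xᵀ * X = exp A := by
    rw [hX, hdecomp]
    exact transpose_mul_self_exp_half_smul_mul_transpose hD.isSymm hU'
  have hXF : Xᵀ * X * exp (-A) = 1 := by
    rw [hgram, ← exp_add_of_commute _ _ (.neg_right (.refl A)), add_neg_cancel, exp_zero]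
  have hdiag : (Xᵀ * X).diag = s := funext fun p => by rw [hgram, hs, diag_apply]
  have ha' : a = 1 ⬝ᵥ exp (-A) *ᵥ 1 := by simp [ha, dotProduct, mulVec]
  have hb' : b = s ⬝ᵥ exp (-A) *ᵥ 1 := by simp [hb, dotProduct, mulVec, Finset.mul_sum]
  have hc' : c = s ⬝ᵥ exp (-A) *ᵥ s := by
    simp [hc, dotProduct, mulVec, Finset.mul_sum, mul_assoc]
  have : Nonempty (Fin n) := hconn.nonempty
  have hapos : 0 < a := by
    simpa [ha'] using (posDef_of_transpose_mul_self_mul_eq_one hXF).dotProduct_mulVec_pos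
      (one_ne_zero (α := Fin n → ℝ))
  obtain ⟨x₀, hx₀⟩ := exists_center_sum_sq_sub_eq hXF hdiag (ha' ▸ hapos.ne')
  rw [← ha', ← hb', ← hc'] at hx₀
  exact ⟨hapos, hx₀ (Classical.arbitrary _) ▸ by positivity, x₀, hx₀⟩

/-- Let `A` be the adjacency matrix of a simple connected graph on `n`
vertices, with spectral decomposition `A = U D Uᵀ`, `X = e^{D/2} Uᵀ`, and `x_p` the `p`-th
column of `X`.  With `s_p = (e^A)_{pp}`, `a = 1ᵀ e^{−A} 1`, `b = sᵀ e^{−A} 1`,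
`c = sᵀ e^{−A} s`, we have `a > 0`, `R² = (c − (2 − b)²/a)/4 ≥ 0`, and all the points `x_p`
lie on a hypersphere of radius `R = √(R²)` centred at some point `x₀`. -/
theorem hyperspherical_embedding
    (n : ℕ) (G : SimpleGraph (Fin n)) [DecidableRel G.Adj] (hconn : G.Connected)
    (A U D : Matrix (Fin n) (Fin n) ℝ)
    (hAdj : A = G.adjMatrix ℝ)
    (hD : D.IsDiag) (hU : U * Uᵀ = 1) (hU' : Uᵀ * U = 1)
    (hdecomp : A = U * D * Uᵀ)
    (X : Matrix (Fin n) (Fin n) ℝ)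
    (hX : X = NormedSpace.exp ((1 / 2 : ℝ) • D) * Uᵀ)
    (s : Fin n → ℝ) (hs : ∀ p, s p = NormedSpace.exp A p p)
    (a b c : ℝ)
    (ha : a = ∑ p, ∑ q, NormedSpace.exp (-A) p q)
    (hb : b = ∑ p, ∑ q, s p * NormedSpace.exp (-A) p q)
    (hc : c = ∑ p, ∑ q, s p * NormedSpace.exp (-A) p q * s q) :
    0 < a ∧
    0 ≤ (c - (2 - b) ^ 2 / a) / 4 ∧
    ∃ x₀ : Fin n → ℝ, ∀ p, ∑ i, (X i p - x₀ i) ^ 2 = (c - (2 - b) ^ 2 / a) / 4 :=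
  hyperspherical_embedding_general n G hconn A U D hD hU' hdecomp X hX s hs a b c ha hb hc
end

section
/- Let P_n be the path graph with vertices 1, …, n and adjacency matrix A. Then for every pair of vertices p, q, the communicability satisfies (e^A)_{pq} = (1/(n+1)) Σ_{j=1}^{n} [ cos(jπ(p−q)/(n+1)) − cos(jπ(p+q)/(n+1)) ] · e^{2 cos(jπ/(n+1))}. -/
open Matrix Real

/-- The adjacency matrix of the path graph `P_n`: the vertex `p ∈ {1, …, n}` is represented
by the index `p - 1 : Fin n`, and vertices are adjacent iff they are consecutive. -/
def pathAdj (n : ℕ) : Matrix (Fin n) (Fin n) ℝ :=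
  Matrix.of fun p q => if p.1 + 1 = q.1 ∨ q.1 + 1 = p.1 then 1 else 0

/-!
The vectors `(sin (p θⱼ))ₚ` with `θⱼ = jπ/(n+1)` are eigenvectors of the path adjacency matrix
with eigenvalues `2 cos θⱼ`, since `sin ((p-1)θ) + sin ((p+1)θ) = 2 cos θ sin (pθ)` and `sin (pθⱼ)`
vanishes at `p = 0` and `p = n+1`. The symmetric sine matrix `S` they form satisfies
`S² = (n+1)/2 • 1` (a telescoping cosine sum), so `e^A = S e^D S · 2/(n+1)`, and the product-to-sum
formula `2 sin x sin y = cos (x - y) - cos (x + y)` turns its entries into the stated ones.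
-/

open Finset

theorem Matrix.exp_eq_of_mul_eq_mul_diagonal {m 𝔸 : Type*} [Fintype m] [DecidableEq m]
    [NormedCommRing 𝔸] [NormedAlgebra ℚ 𝔸] [CompleteSpace 𝔸] {A S T : Matrix m m 𝔸} {d : m → 𝔸}
    (hAS : A * S = S * diagonal d) (hST : S * T = 1) :
    NormedSpace.exp A = S * diagonal (NormedSpace.exp d) * T := by
  have hT : S⁻¹ = T := inv_eq_right_inv hST
  have hA : A = S * diagonal d * S⁻¹ := by
    rw [hT, ← hAS, Matrix.mul_assoc, hST, Matrix.mul_one]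
  rw [hA, exp_conj _ _ (.of_mul_eq_one T hST), exp_diagonal, hT]

theorem two_mul_sin_half_mul_sum_range_cos (θ : ℝ) (n : ℕ) :
    2 * sin (θ / 2) * ∑ j ∈ range n, cos ((j + 1) * θ) = sin ((n + 1 / 2) * θ) - sin (θ / 2) := by
  induction n with
  | zero => simp [div_eq_inv_mul]
  | succ n ih =>
    rw [sum_range_succ, mul_add, ih, two_mul_sin_mul_cos]
    push_cast
    rw [show θ / 2 - (n + 1) * θ = -((n + 1 / 2) * θ) by ring, sin_neg]
    ring_nf

theorem sum_range_cos_int_mul_pi_div (n : ℕ) {k : ℤ} (hk0 : k ≠ 0) (hk : |k| < 2 * (n + 1)) :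
    ∑ j ∈ range n, cos ((j + 1) * (k * π / (n + 1))) = -(1 + cos (k * π)) / 2 := by
  set θ := k * π / (n + 1) with hθ
  have hsin : sin (θ / 2) ≠ 0 := by
    rw [Ne, sin_eq_zero_iff]
    rintro ⟨m, hm⟩
    have hkm : k = 2 * (n + 1) * m := by
      rw [hθ] at hm
      field_simp at hm
      exact_mod_cast (by linear_combination -hm : (k : ℝ) = 2 * (n + 1) * m)
    exact hk0 (Int.eq_zero_of_abs_lt_dvd ⟨m, hkm⟩ hk)
  have hend : sin ((n + 1 / 2) * θ) = -cos (k * π) * sin (θ / 2) := by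
    rw [show (n + 1 / 2) * θ = k * π - θ / 2 by rw [hθ]; field_simp; ring, sin_sub,
      sin_int_mul_pi]
    ring
  have htel := two_mul_sin_half_mul_sum_range_cos θ n
  rw [hend] at htel
  apply mul_left_cancel₀ (mul_ne_zero two_ne_zero hsin)
  linear_combination htel

theorem pathAdj_mulVec_apply (n : ℕ) (f : ℕ → ℝ) (h0 : f 0 = 0) (hn : f (n + 1) = 0)
    (p : Fin n) : (pathAdj n *ᵥ fun q => f (q.1 + 1)) p = f p.1 + f (p.1 + 2) := by
  have hsplit : ∀ q : ℕ, (if p.1 + 1 = q ∨ q + 1 = p.1 then (1 : ℝ) else 0) * f (q + 1)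
      = (if p.1 + 1 = q then f (p.1 + 2) else 0) + (if q + 1 = p.1 then f (q + 1) else 0) := by
    intro q
    split_ifs <;> grind
  simp only [mulVec, dotProduct, pathAdj, of_apply]
  rw [Fin.sum_univ_eq_sum_range (fun q => (if p.1 + 1 = q ∨ q + 1 = p.1 then (1 : ℝ) else 0)
    * f (q + 1)), sum_congr rfl fun q _ => hsplit q, sum_add_distrib, sum_ite_eq, add_comm]
  congr 1
  · have hshift := sum_range_succ' (fun m => if m = p.1 then f m else 0) n
    rw [sum_ite_eq', if_pos (mem_range.mpr (by omega)), h0, ite_self, add_zero] at hshift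
    exact hshift.symm
  · split_ifs with h
    · rfl
    · rw [show p.1 + 2 = n + 1 by grind, hn]

noncomputable def pathSinMatrix (n : ℕ) : Matrix (Fin n) (Fin n) ℝ :=
  of fun p j => sin ((p.1 + 1) * ((j.1 + 1) * π / (n + 1)))

theorem pathAdj_mul_pathSinMatrix (n : ℕ) :
    pathAdj n * pathSinMatrix n
      = pathSinMatrix n * diagonal fun j => 2 * cos ((j.1 + 1) * π / (n + 1)) := by
  ext p j
  set θ : ℝ := (j.1 + 1) * π / (n + 1) with hθ
  have hcol : ∀ q : Fin n, pathSinMatrix n q j = sin ((q.1 + 1 : ℕ) * θ) := fun q => by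
    simp [pathSinMatrix, θ]
  have hvanish : sin ((n + 1 : ℕ) * θ) = 0 := by
    rw [show ((n + 1 : ℕ) : ℝ) * θ = (j.1 + 1 : ℕ) * π by push_cast; rw [hθ]; field_simp]
    exact sin_nat_mul_pi _
  rw [mul_diagonal, hcol p]
  change (pathAdj n *ᵥ fun q => pathSinMatrix n q j) p = _
  simp_rw [hcol]
  rw [pathAdj_mulVec_apply n (fun m => sin (m * θ)) (by simp) hvanish, ← hθ]
  have hrec := two_mul_sin_mul_cos ((p.1 + 1 : ℕ) * θ) θ
  rw [show ((p.1 + 1 : ℕ) : ℝ) * θ - θ = p.1 * θ by push_cast; ring,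
    show ((p.1 + 1 : ℕ) : ℝ) * θ + θ = (p.1 + 2 : ℕ) * θ by push_cast; ring] at hrec
  linear_combination -hrec

theorem two_mul_pathSinMatrix_mul_self_apply (n : ℕ) (p q : Fin n) :
    2 * (pathSinMatrix n * pathSinMatrix n) p q
      = ∑ j ∈ range n, cos ((j + 1) * (((p.1 : ℤ) - q.1 : ℤ) * π / (n + 1)))
        - ∑ j ∈ range n, cos ((j + 1) * (((p.1 : ℤ) + q.1 + 2 : ℤ) * π / (n + 1))) := by
  simp only [mul_apply, pathSinMatrix, of_apply]
  rw [mul_sum, ← sum_sub_distrib,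
    Fin.sum_univ_eq_sum_range (fun j => 2 * (sin ((p.1 + 1) * ((j + 1) * π / (n + 1)))
      * sin ((j + 1) * ((q.1 + 1) * π / (n + 1))))) n]
  refine sum_congr rfl fun j _ => ?_
  rw [← mul_assoc, two_mul_sin_mul_sin]
  push_cast
  ring_nf

theorem pathSinMatrix_mul_self (n : ℕ) :
    pathSinMatrix n * pathSinMatrix n = (((n : ℝ) + 1) / 2) • (1 : Matrix (Fin n) (Fin n) ℝ) := by
  ext p q
  have hsum := two_mul_pathSinMatrix_mul_self_apply n p q
  have hp := p.2
  have hq := q.2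
  rw [sum_range_cos_int_mul_pi_div n (k := (p.1 : ℤ) + q.1 + 2) (by omega)
    (abs_lt.mpr ⟨by omega, by omega⟩)] at hsum
  rw [Matrix.smul_apply, smul_eq_mul]
  by_cases hpq : p = q
  · subst hpq
    have hcos : cos (((p.1 : ℤ) + p.1 + 2 : ℤ) * π) = 1 := by
      rw [show (((p.1 : ℤ) + p.1 + 2 : ℤ) : ℝ) * π = (p.1 + 1 : ℕ) * (2 * π) by push_cast; ring]
      exact cos_nat_mul_two_pi _
    rw [hcos, sub_self] at hsum
    simp only [Int.cast_zero, zero_mul, zero_div, mul_zero, cos_zero, sum_const, card_range,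
      nsmul_eq_mul, mul_one] at hsum
    rw [one_apply_eq]
    linarith
  · have hne : (p.1 : ℤ) ≠ q.1 := fun h => hpq (Fin.ext (by exact_mod_cast h))
    rw [sum_range_cos_int_mul_pi_div n (k := (p.1 : ℤ) - q.1) (by omega)
      (abs_lt.mpr ⟨by omega, by omega⟩)] at hsum
    have hcos : cos (((p.1 : ℤ) + q.1 + 2 : ℤ) * π) = cos (((p.1 : ℤ) - q.1 : ℤ) * π) := by
      rw [← cos_add_int_mul_two_pi (((p.1 : ℤ) - q.1 : ℤ) * π) ((q.1 : ℤ) + 1)]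
      push_cast
      ring_nf
    rw [hcos] at hsum
    rw [one_apply_ne hpq]
    linarith

/-- For the path graph `P_n` with adjacency matrix `A`, the communicability
between vertices `p, q ∈ {1, …, n}` (represented by indices `p - 1, q - 1 : Fin n`) is
`(e^A)_{pq} = (1/(n+1)) Σ_{j=1}^{n} [cos(jπ(p−q)/(n+1)) − cos(jπ(p+q)/(n+1))]
  e^{2 cos(jπ/(n+1))}`. -/
theorem path_graph_communicability (n : ℕ) (p q : Fin n) :
    NormedSpace.exp (pathAdj n) p q
      = (1 / ((n : ℝ) + 1)) * ∑ j : Fin n,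
          (Real.cos (((j.1 : ℝ) + 1) * Real.pi * (((p.1 : ℝ) + 1) - ((q.1 : ℝ) + 1)) / (n + 1))
            - Real.cos (((j.1 : ℝ) + 1) * Real.pi * (((p.1 : ℝ) + 1) + ((q.1 : ℝ) + 1)) / (n + 1)))
          * Real.exp (2 * Real.cos (((j.1 : ℝ) + 1) * Real.pi / (n + 1))) := by
  have hinv : pathSinMatrix n * ((2 / ((n : ℝ) + 1)) • pathSinMatrix n) = 1 := by
    rw [Matrix.mul_smul, pathSinMatrix_mul_self, smul_smul,
      div_mul_div_cancel₀' two_ne_zero, div_self (by positivity), one_smul]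
  rw [exp_eq_of_mul_eq_mul_diagonal (pathAdj_mul_pathSinMatrix n) hinv, mul_apply, mul_sum]
  refine sum_congr rfl fun j _ => ?_
  simp only [mul_diagonal, Matrix.smul_apply, smul_eq_mul, Pi.exp_def, ← Real.exp_eq_exp_ℝ,
    pathSinMatrix, of_apply]
  set x : ℝ := (p.1 + 1) * ((j.1 + 1) * π / (n + 1))
  set y : ℝ := (j.1 + 1) * ((q.1 + 1) * π / (n + 1))
  rw [show ((j.1 : ℝ) + 1) * π * ((p.1 + 1) - (q.1 + 1)) / (n + 1) = x - y by ring,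
    show ((j.1 : ℝ) + 1) * π * ((p.1 + 1) + (q.1 + 1)) / (n + 1) = x + y by ring,
    ← two_mul_sin_mul_sin]
  ring
end

section
/- For an integer k, let I_k(2) = Σ_{m=0}^{∞} 1/(m! · (m+|k|)!). Let P_n be the path graph with vertices 1, …, n and adjacency matrix A_n. Then for every fixed pair of positive integers p, q, the communicability converges as n → ∞: lim_{n→∞} (e^{A_n})_{pq} = I_{p−q}(2) − I_{p+q}(2). In particular, lim_{n→∞} (e^{A_n})_{pp} = I_0(2) − I_{2p}(2). -/
open Matrix Filter Topology

/-- The modified Bessel function of the first kind evaluated at `2`: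
`I_k(2) = Σ_{m=0}^{∞} 1/(m! (m+|k|)!)`. -/
noncomputable def besselI2 (k : ℤ) : ℝ :=
  ∑' m : ℕ, 1 / ((Nat.factorial m : ℝ) * (Nat.factorial (m + k.natAbs) : ℝ))

/-- The communicability `G_{pq} = (e^{A_n})_{pq}` of the path graph `P_n` between vertices
`p, q ∈ {1, …, n}` (junk value `0` if `p` or `q` is not a vertex of `P_n`). -/
noncomputable def pathComm (n p q : ℕ) : ℝ :=
  if hp : p - 1 < n then
    if hq : q - 1 < n then NormedSpace.exp (pathAdj n) ⟨p - 1, hp⟩ ⟨q - 1, hq⟩ else 0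
  else 0

/-!
Index the vertices of `P_n` from `0`. A walk on `P_n` of length `ℓ` ending at `b` with
`b + ℓ < n` never reaches the right end of the path, so it is a walk on the half-line `ℕ`.
By the reflection principle the number of such walks from `a` to `b` is
`W ℓ (a - b) - W ℓ (a + b + 2)`, where `W ℓ j` counts the walks of length `ℓ` on `ℤ` that move
by `j`. Hence each term of `(e^{A_n})_{ab} = ∑ (A_n^ℓ)_{ab} / ℓ!` stabilises as `n → ∞`, the
terms are dominated by `2^ℓ / ℓ!`, and `∑ W ℓ j / ℓ! = I_j(2)` since
`W (2m + |j|) j = (2m + |j|)! / (m! (m + |j|)!)` and `W ℓ j = 0` for all other `ℓ`.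
-/

open Nat

/-- The number `W ℓ j` of walks of length `ℓ` on `ℤ` from `0` to `j`: `(ℓ + |j|) / 2` of their
steps go towards `j`. -/
def lineWalks (ℓ : ℕ) (j : ℤ) : ℕ :=
  if (ℓ + j.natAbs) % 2 = 0 then ℓ.choose ((ℓ + j.natAbs) / 2) else 0

theorem lineWalks_neg (ℓ : ℕ) (j : ℤ) : lineWalks ℓ (-j) = lineWalks ℓ j := by
  simp only [lineWalks, Int.natAbs_neg]

theorem lineWalks_zero (j : ℤ) : lineWalks 0 j = if j = 0 then 1 else 0 := by
  rcases eq_or_ne j 0 with rfl | hj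
  · simp [lineWalks]
  · rw [if_neg hj, lineWalks]
    split_ifs
    exacts [choose_eq_zero_of_lt (by omega), rfl]

theorem lineWalks_succ (ℓ : ℕ) (j : ℤ) :
    lineWalks (ℓ + 1) j = lineWalks ℓ (j - 1) + lineWalks ℓ (j + 1) := by
  wlog hj : 0 ≤ j generalizing j
  · have := this (-j) (by omega)
    rwa [lineWalks_neg, show -j - 1 = -(j + 1) by ring, show -j + 1 = -(j - 1) by ring,
      lineWalks_neg, lineWalks_neg, add_comm (lineWalks ℓ (j + 1))] at this
  obtain ⟨k, rfl⟩ := Int.eq_ofNat_of_zero_le hj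
  unfold lineWalks
  rcases k with _ | s
  · have h₁ : ((0 : ℕ) - 1 : ℤ).natAbs = 1 := rfl
    have h₂ : ((0 : ℕ) + 1 : ℤ).natAbs = 1 := rfl
    simp only [Int.natAbs_natCast, h₁, h₂]
    split_ifs <;> try omega
    obtain ⟨t, rfl⟩ : ∃ t, ℓ = 2 * t + 1 := ⟨ℓ / 2, by omega⟩
    rw [show (2 * t + 1 + 1 + 0) / 2 = t + 1 by omega, choose_succ_succ', choose_symm_half]
  · have h₁ : ((s + 1 : ℕ) - 1 : ℤ).natAbs = s := by omega
    have h₂ : ((s + 1 : ℕ) + 1 : ℤ).natAbs = s + 2 := by omega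
    simp only [Int.natAbs_natCast, h₁, h₂]
    split_ifs <;> try omega
    obtain ⟨t, ht⟩ : ∃ t, ℓ + s = 2 * t := ⟨(ℓ + s) / 2, by omega⟩
    rw [show (ℓ + 1 + (s + 1)) / 2 = t + 1 by omega, show (ℓ + s) / 2 = t by omega,
      show (ℓ + (s + 2)) / 2 = t + 1 by omega, choose_succ_succ']

theorem lineWalks_eq_zero_of_notMem {ℓ : ℕ} {j : ℤ}
    (h : ℓ ∉ Set.range fun m => 2 * m + j.natAbs) : lineWalks ℓ j = 0 := by
  unfold lineWalks
  split_ifs with hpar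
  · refine choose_eq_zero_of_lt ?_
    by_contra! hle
    exact h ⟨(ℓ - j.natAbs) / 2, by dsimp only; omega⟩
  · rfl

theorem lineWalks_div_factorial (m : ℕ) (j : ℤ) :
    (lineWalks (2 * m + j.natAbs) j : ℝ) / (2 * m + j.natAbs)! =
      1 / ((m ! : ℝ) * (m + j.natAbs)!) := by
  have hpar : (2 * m + j.natAbs + j.natAbs) % 2 = 0 := by omega
  rw [lineWalks, if_pos hpar, show (2 * m + j.natAbs + j.natAbs) / 2 = m + j.natAbs by omega,
    cast_choose ℝ (by omega), show 2 * m + j.natAbs - (m + j.natAbs) = m by omega]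
  field_simp

theorem summable_one_div_factorial_mul_factorial (k : ℕ) :
    Summable fun m : ℕ => 1 / ((m ! : ℝ) * (m + k)!) := by
  refine (Real.summable_pow_div_factorial 1).of_nonneg_of_le (fun m => by positivity) fun m => ?_
  rw [one_pow]
  gcongr
  exact le_mul_of_one_le_right (by positivity) (by exact_mod_cast factorial_pos _)

theorem hasSum_lineWalks_div_factorial (j : ℤ) :
    HasSum (fun ℓ => (lineWalks ℓ j : ℝ) / ℓ !) (besselI2 j) := by
  have hinj : Function.Injective fun m => 2 * m + j.natAbs := fun x y h => by
    dsimp only at h; omega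
  rw [← hinj.hasSum_iff fun ℓ hℓ => by simp [lineWalks_eq_zero_of_notMem hℓ]]
  simp only [Function.comp_def, lineWalks_div_factorial]
  exact (summable_one_div_factorial_mul_factorial _).hasSum

theorem Matrix.hasSum_exp_apply {m : Type*} [Fintype m] [DecidableEq m]
    (M : Matrix m m ℝ) (i j : m) :
    HasSum (fun ℓ => (M ^ ℓ) i j / ℓ !) (NormedSpace.exp M i j) := by
  -- any Banach-algebra norm inducing the product topology gives the exponential series
  let _ := Matrix.linftyOpNormedRing (n := m) (α := ℝ)
  let _ := Matrix.linftyOpNormedAlgebra (n := m) (R := ℝ) (α := ℝ)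
  simp only [div_eq_inv_mul]
  exact Pi.hasSum.mp (Pi.hasSum.mp (NormedSpace.exp_series_hasSum_exp' (𝕂 := ℝ) M) i) j

theorem mul_pathAdj_apply {n : ℕ} (M : Matrix (Fin n) (Fin n) ℝ) (a b : Fin n) :
    (M * pathAdj n) a b =
      (if h : 0 < b.1 then M a ⟨b - 1, by omega⟩ else 0) +
      (if h : b.1 + 1 < n then M a ⟨b + 1, h⟩ else 0) := by
  have hsplit : ∀ r : Fin n, M a r * pathAdj n r b =
      (if r.1 + 1 = b then M a r else 0) + (if b.1 + 1 = r then M a r else 0) := by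
    intro r
    simp only [pathAdj, of_apply]
    split_ifs <;> first | omega | simp
  simp only [mul_apply, hsplit, Finset.sum_add_distrib]
  congr 1
  · split_ifs with h
    · rw [Finset.sum_eq_single ⟨b - 1, by omega⟩
        (fun r _ hr => if_neg fun e => hr (Fin.ext (by simp only; omega))) (by simp)]
      exact if_pos (Nat.sub_add_cancel h)
    · exact Finset.sum_eq_zero fun r _ => if_neg (by omega)
  · split_ifs with h
    · rw [Finset.sum_eq_single ⟨b + 1, h⟩
        (fun r _ hr => if_neg fun e => hr (Fin.ext (by simp only; omega))) (by simp)]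
      simp
    · exact Finset.sum_eq_zero fun r _ => if_neg (by omega)

theorem abs_pathAdj_pow_apply_le {n : ℕ} (ℓ : ℕ) (a b : Fin n) :
    |(pathAdj n ^ ℓ) a b| ≤ 2 ^ ℓ := by
  induction ℓ generalizing b with
  | zero => simp only [pow_zero, one_apply]; split_ifs <;> simp
  | succ ℓ ih =>
    rw [pow_succ, mul_pathAdj_apply, pow_succ, mul_two]
    refine (abs_add_le _ _).trans (add_le_add ?_ ?_) <;> split_ifs <;> simp [ih]

theorem pathAdj_pow_apply {n ℓ : ℕ} (a b : Fin n) (h : b.1 + ℓ < n) :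
    (pathAdj n ^ ℓ) a b = (lineWalks ℓ (a - b) : ℝ) - lineWalks ℓ (a + b + 2) := by
  induction ℓ generalizing b with
  | zero =>
    have hab : ((a : ℤ) - b = 0) ↔ a = b := by rw [sub_eq_zero, Nat.cast_inj, Fin.val_inj]
    simp only [pow_zero, one_apply, lineWalks_zero, hab]
    split_ifs <;> first | omega | simp
  | succ ℓ ih =>
    have hrec : (lineWalks (ℓ + 1) (a - b) : ℝ) - lineWalks (ℓ + 1) (a + b + 2) =
        (lineWalks ℓ (a - b + 1) - lineWalks ℓ (a + b + 1)) +
        (lineWalks ℓ (a - (b + 1 : ℕ)) - lineWalks ℓ (a + (b + 1 : ℕ) + 2)) := by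
      rw [lineWalks_succ, lineWalks_succ,
        show (a - b - 1 : ℤ) = a - (b + 1 : ℕ) by push_cast; ring,
        show (a + b + 2 - 1 : ℤ) = a + b + 1 by ring,
        show (a + b + 2 + 1 : ℤ) = a + (b + 1 : ℕ) + 2 by push_cast; ring]
      push_cast; ring
    rw [pow_succ, mul_pathAdj_apply, dif_pos (show b.1 + 1 < n by omega),
      ih ⟨b + 1, by omega⟩ (by dsimp only; omega), hrec]
    congr 1
    split_ifs with hb
    · rw [ih _ (by dsimp only; omega), Fin.val_mk, show ((b.1 - 1 : ℕ) : ℤ) = b - 1 by omega]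
      ring_nf
    · simp [show b.1 = 0 by omega]

theorem tendsto_pathComm {p q : ℕ} (hp : 0 < p) (hq : 0 < q) :
    Tendsto (fun n => pathComm n p q) atTop
      (𝓝 (besselI2 ((p : ℤ) - (q : ℤ)) - besselI2 ((p : ℤ) + (q : ℤ)))) := by
  obtain ⟨a, rfl⟩ : ∃ a, p = a + 1 := ⟨p - 1, by omega⟩
  obtain ⟨b, rfl⟩ : ∃ b, q = b + 1 := ⟨q - 1, by omega⟩
  -- after this shift `a` and `b` are vertices of every graph in the sequence
  rw [← tendsto_add_atTop_iff_nat (a + b + 1)]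
  let F : ℕ → ℕ → ℝ := fun n ℓ =>
    (pathAdj (n + (a + b + 1)) ^ ℓ) ⟨a, by omega⟩ ⟨b, by omega⟩ / (ℓ ! : ℝ)
  have hcomm : ∀ n, pathComm (n + (a + b + 1)) (a + 1) (b + 1) = ∑' ℓ, F n ℓ := fun n => by
    simp only [pathComm, add_tsub_cancel_right, dif_pos (show a < n + (a + b + 1) by omega),
      dif_pos (show b < n + (a + b + 1) by omega)]
    exact ((pathAdj _).hasSum_exp_apply _ _).tsum_eq.symm
  have hlim : ∀ ℓ, Tendsto (F · ℓ) atTop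
      (𝓝 (((lineWalks ℓ (a - b) : ℝ) - lineWalks ℓ (a + b + 2)) / ℓ !)) := fun ℓ =>
    tendsto_const_nhds.congr' <| (eventually_ge_atTop ℓ).mono fun n hn => by
      simp only [F]
      rw [pathAdj_pow_apply _ ⟨b, _⟩ (by dsimp only; omega)]
  have hbound : ∀ n ℓ, ‖F n ℓ‖ ≤ 2 ^ ℓ / ℓ ! := fun n ℓ => by
    rw [Real.norm_eq_abs, abs_div, Nat.abs_cast]
    gcongr
    exact abs_pathAdj_pow_apply_le _ _ _
  have hsum : ∑' ℓ, ((lineWalks ℓ (a - b) : ℝ) - lineWalks ℓ (a + b + 2)) / ℓ ! =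
      besselI2 ((a + 1 : ℕ) - (b + 1 : ℕ)) - besselI2 ((a + 1 : ℕ) + (b + 1 : ℕ)) := by
    rw [show ((a + 1 : ℕ) - (b + 1 : ℕ) : ℤ) = a - b by push_cast; ring,
      show ((a + 1 : ℕ) + (b + 1 : ℕ) : ℤ) = a + b + 2 by push_cast; ring]
    simp only [sub_div]
    exact ((hasSum_lineWalks_div_factorial _).sub (hasSum_lineWalks_div_factorial _)).tsum_eq
  simpa only [hcomm, hsum] using tendsto_tsum_of_dominated_convergence
    (Real.summable_pow_div_factorial 2) hlim (.of_forall hbound)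

/-- For fixed vertices `p, q ≥ 1` the communicability of the path graph
`P_n` converges as `n → ∞`: `lim_{n→∞} (e^{A_n})_{pq} = I_{p−q}(2) − I_{p+q}(2)`; in
particular `lim_{n→∞} (e^{A_n})_{pp} = I_0(2) − I_{2p}(2)`. -/
theorem path_graph_communicability_limit (p q : ℕ) (hp : 0 < p) (hq : 0 < q) :
    Tendsto (fun n => pathComm n p q) atTop
      (𝓝 (besselI2 ((p : ℤ) - (q : ℤ)) - besselI2 ((p : ℤ) + (q : ℤ)))) ∧
    Tendsto (fun n => pathComm n p p) atTop
      (𝓝 (besselI2 0 - besselI2 (2 * (p : ℤ)))) := by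
  refine ⟨tendsto_pathComm hp hq, ?_⟩
  simpa only [sub_self, two_mul] using tendsto_pathComm hp hp
end

section
/- For an integer k, let I_k(2) = Σ_{m=0}^{∞} 1/(m! · (m+|k|)!). Define, for each integer q ≥ 2, c(q) = (I_{q−1}(2) − I_{q+1}(2)) / √( (I_0(2) + I_2(2)) · (I_0(2) − I_{2q}(2)) ) (the n → ∞ limit of the cosine of the communicability angle between vertex 1 and vertex q in the path graph P_n). Then the sequence (c(q))_{q≥2} is strictly decreasing and lim_{q→∞} c(q) = 0. -/
open Filter Topology

/-- The `n → ∞` limit of the cosine of the communicability angle between vertex `1` and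
vertex `q` of the path graph `P_n`:
`c(q) = (I_{q−1}(2) − I_{q+1}(2)) / √((I_0(2) + I_2(2))(I_0(2) − I_{2q}(2)))`. -/
noncomputable def pathCosLimit (q : ℕ) : ℝ :=
  (besselI2 ((q : ℤ) - 1) - besselI2 ((q : ℤ) + 1))
    / Real.sqrt ((besselI2 0 + besselI2 2) * (besselI2 0 - besselI2 (2 * (q : ℤ))))

/-! For `k : ℕ` the series `I_k(2) = ∑ₘ 1/(m! (m+k)!)` is positive, strictly decreasing in `k`
and at most `I_0(2)/k!`. So the denominator of `c(q)` increases with `q` and tends to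
`√((I_0(2) + I_2(2)) I_0(2)) > 0`, while the numerator `I_{q-1}(2) - I_{q+1}(2)` tends to `0`.
The numerator also decreases, termwise in `m`: `n ↦ 1/n! - 1/(n+2)!` is strictly decreasing
for `n ≥ 1`, since there `1/(n+1)! + 1/(n+2)! ≤ (1/2 + 1/6)/n! < 1/n! + 1/(n+3)!`. -/

open Nat

lemma besselI2_natCast (k : ℕ) : besselI2 k = ∑' m : ℕ, (m ! : ℝ)⁻¹ * ((m + k)! : ℝ)⁻¹ := by
  simp only [besselI2, Int.natAbs_natCast, one_div, mul_inv]

lemma summable_inv_factorial_mul_inv_factorial_add (k : ℕ) :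
    Summable fun m : ℕ => (m ! : ℝ)⁻¹ * ((m + k)! : ℝ)⁻¹ := by
  have h : Summable fun m : ℕ => (m ! : ℝ)⁻¹ := by
    simpa using Real.summable_pow_div_factorial 1
  refine h.of_nonneg_of_le (fun m => by positivity) fun m => ?_
  exact mul_le_of_le_one_right (by positivity)
    (inv_le_one_of_one_le₀ (mod_cast (m + k).factorial_pos))

lemma besselI2_natCast_pos (k : ℕ) : 0 < besselI2 k := by
  rw [besselI2_natCast]
  exact (summable_inv_factorial_mul_inv_factorial_add k).tsum_pos (fun m => by positivity) 0
    (by positivity)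

lemma besselI2_natCast_strictAnti : StrictAnti fun k : ℕ => besselI2 k := by
  refine strictAnti_nat_of_succ_lt fun k => ?_
  simp only [besselI2_natCast]
  -- the terms with `m = 0` agree when `k = 0`, so the strict inequality is taken at `m = 1`
  refine Summable.tsum_lt_tsum (i := 1) (fun m => ?_) ?_
    (summable_inv_factorial_mul_inv_factorial_add _) (summable_inv_factorial_mul_inv_factorial_add _)
  · gcongr; omega
  · gcongr; omega

lemma besselI2_natCast_le_div_factorial (k : ℕ) : besselI2 k ≤ besselI2 0 / k ! := by
  have h0 := besselI2_natCast 0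
  simp only [Nat.cast_zero, Nat.add_zero] at h0
  rw [besselI2_natCast, h0, ← tsum_div_const]
  refine Summable.tsum_le_tsum (fun m => ?_) (summable_inv_factorial_mul_inv_factorial_add k)
    ((summable_inv_factorial_mul_inv_factorial_add 0).div_const _)
  have h : (m ! * k ! : ℝ) ≤ (m + k)! :=
    mod_cast Nat.le_of_dvd (Nat.factorial_pos _) (Nat.factorial_mul_factorial_dvd_factorial_add m k)
  calc (m ! : ℝ)⁻¹ * ((m + k)! : ℝ)⁻¹ ≤ (m ! : ℝ)⁻¹ * ((m ! : ℝ) * k !)⁻¹ := by gcongr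
    _ = (m ! : ℝ)⁻¹ * (m ! : ℝ)⁻¹ / k ! := by ring

lemma tendsto_besselI2_natCast_atTop : Tendsto (fun k : ℕ => besselI2 k) atTop (𝓝 0) := by
  have h : Tendsto (fun k : ℕ => besselI2 0 / k !) atTop (𝓝 0) :=
    tendsto_const_nhds.div_atTop (tendsto_natCast_atTop_atTop.comp factorial_tendsto_atTop)
  exact tendsto_of_tendsto_of_tendsto_of_le_of_le tendsto_const_nhds h
    (fun k => (besselI2_natCast_pos k).le) besselI2_natCast_le_div_factorial

lemma inv_factorial_sub_inv_factorial_add_two_lt {n : ℕ} (hn : 1 ≤ n) :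
    ((n + 1)! : ℝ)⁻¹ - ((n + 1 + 2)! : ℝ)⁻¹ < (n ! : ℝ)⁻¹ - ((n + 2)! : ℝ)⁻¹ := by
  simp only [Nat.factorial_succ, Nat.cast_mul, Nat.cast_add, Nat.cast_one, Nat.cast_ofNat]
  have hn' : (0 : ℝ) ≤ n - 1 := sub_nonneg.2 (mod_cast hn)
  field_simp
  nlinarith [mul_nonneg hn' hn', mul_nonneg (mul_nonneg hn' hn') hn']

lemma besselI2_natCast_sub_add_two_lt {k : ℕ} (hk : 1 ≤ k) :
    besselI2 ↑(k + 1) - besselI2 ↑(k + 1 + 2) < besselI2 k - besselI2 ↑(k + 2) := by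
  have hs := summable_inv_factorial_mul_inv_factorial_add
  have hterm : ∀ m : ℕ,
      (m ! : ℝ)⁻¹ * ((m + (k + 1))! : ℝ)⁻¹ - (m ! : ℝ)⁻¹ * ((m + (k + 1 + 2))! : ℝ)⁻¹
        < (m ! : ℝ)⁻¹ * ((m + k)! : ℝ)⁻¹ - (m ! : ℝ)⁻¹ * ((m + (k + 2))! : ℝ)⁻¹ := fun m => by
    simp only [← mul_sub, ← add_assoc]
    exact mul_lt_mul_of_pos_left (inv_factorial_sub_inv_factorial_add_two_lt (by omega))
      (by positivity)
  simp only [besselI2_natCast, ← (hs _).tsum_sub (hs _)]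
  exact Summable.tsum_lt_tsum (i := 0) (fun m => (hterm m).le) (hterm 0)
    ((hs _).sub (hs _)) ((hs _).sub (hs _))

lemma pathCosLimit_succ (p : ℕ) :
    pathCosLimit (p + 1) = (besselI2 p - besselI2 ↑(p + 2))
      / √((besselI2 0 + besselI2 2) * (besselI2 0 - besselI2 ↑(2 * p + 2))) := by
  unfold pathCosLimit
  push_cast
  ring_nf

/-- The sequence `(c(q))_{q ≥ 2}` is strictly decreasing and tends to `0`
as `q → ∞`. -/
theorem path_graph_cos_limit_monotone :
    (∀ q : ℕ, 2 ≤ q → pathCosLimit (q + 1) < pathCosLimit q) ∧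
    Tendsto pathCosLimit atTop (𝓝 0) := by
  have hA : 0 < besselI2 0 + besselI2 2 :=
    add_pos (besselI2_natCast_pos 0) (besselI2_natCast_pos 2)
  constructor
  · intro q hq
    obtain ⟨p, rfl⟩ : ∃ p, q = p + 1 := ⟨q - 1, by omega⟩
    have hden : 0 < besselI2 0 - besselI2 ↑(2 * p + 2) :=
      sub_pos.2 (besselI2_natCast_strictAnti (show 0 < 2 * p + 2 by omega))
    rw [pathCosLimit_succ, pathCosLimit_succ]
    refine div_lt_div₀ (besselI2_natCast_sub_add_two_lt (by omega)) ?_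
      (sub_nonneg.2 (besselI2_natCast_strictAnti (by omega)).le) (by positivity)
    gcongr
    exact besselI2_natCast_strictAnti.antitone (by omega)
  · have hI := tendsto_besselI2_natCast_atTop
    rw [← tendsto_add_atTop_iff_nat 1]
    simp only [pathCosLimit_succ]
    have hnum : Tendsto (fun p : ℕ => besselI2 p - besselI2 ↑(p + 2)) atTop (𝓝 0) := by
      simpa using hI.sub (hI.comp (tendsto_add_atTop_nat 2))
    have hden : Tendsto (fun p : ℕ => √((besselI2 0 + besselI2 2) *
        (besselI2 0 - besselI2 ↑(2 * p + 2)))) atTop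
        (𝓝 √((besselI2 0 + besselI2 2) * besselI2 0)) := by
      have h := hI.comp (tendsto_atTop_mono (fun p : ℕ => by omega : ∀ p : ℕ, p ≤ 2 * p + 2)
        tendsto_id)
      simpa using ((tendsto_const_nhds.sub h).const_mul (besselI2 0 + besselI2 2)).sqrt
    have hI0 := besselI2_natCast_pos 0
    simpa only [zero_div, Pi.div_def] using hnum.div hden (by positivity)
end

section
/- Let K_{1,n−1} be the star graph on n ≥ 3 vertices, with hub vertex 1 adjacent to each of the vertices 2, …, n and no other edges, and let A be its adjacency matrix. Then the entries of G = e^A are: G_{11} = cosh(√(n−1)); G_{1q} = G_{q1} = sinh(√(n−1))/√(n−1) for every q ≠ 1; G_{pp} = (cosh(√(n−1)) + n − 2)/(n−1) for every p ≠ 1; and G_{pq} = (cosh(√(n−1)) − 1)/(n−1) for all p ≠ q with p ≠ 1 and q ≠ 1. -/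
/-!
Since `A² = (n-1) e₀e₀ᵀ + uuᵀ`, where `e₀` is the hub indicator and `u` the indicator of the
leaves, `A³ = (n-1) A`. Hence every odd power of `A` is a multiple of `A` and every even
positive power a multiple of `A²`, and the exponential series collapses to
`1 + (sinh √(n-1) / √(n-1)) A + ((cosh √(n-1) - 1) / (n-1)) A²`, whose entries are read off.
-/

open Matrix
open scoped Nat

/-- The adjacency matrix of the star graph `K_{1,n−1}` on vertex set `{1, …, n}` (vertex `p`
is represented by the index `p - 1 : Fin n`): the hub, vertex `1` (index `0`), is adjacent
to every other vertex and there are no other edges. -/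
def starAdj (n : ℕ) : Matrix (Fin n) (Fin n) ℝ :=
  Matrix.of fun p q => if (p.1 = 0 ∧ q.1 ≠ 0) ∨ (q.1 = 0 ∧ p.1 ≠ 0) then 1 else 0

namespace Real

theorem hasSum_sinh_sqrt_div_sqrt {c : ℝ} (hc : 0 < c) :
    HasSum (fun m : ℕ => c ^ m / (2 * m + 1)!) (sinh √c / √c) := by
  have hs : √c ≠ 0 := (sqrt_pos.2 hc).ne'
  have hterm (m : ℕ) : √c ^ (2 * m + 1) / (2 * m + 1)! / √c = c ^ m / (2 * m + 1)! := by
    rw [pow_succ, pow_mul, sq_sqrt hc.le]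
    field_simp
  simpa only [hterm] using (hasSum_sinh √c).div_const √c

theorem hasSum_cosh_sqrt_sub_one_div {c : ℝ} (hc : 0 < c) :
    HasSum (fun m : ℕ => c ^ m / (2 * m + 2)!) ((cosh √c - 1) / c) := by
  have hterm (m : ℕ) : √c ^ (2 * (m + 1)) / (2 * (m + 1))! / c = c ^ m / (2 * m + 2)! := by
    rw [mul_add_one, pow_add, pow_mul, sq_sqrt hc.le]
    field_simp
  have h := ((hasSum_nat_add_iff' 1).2 (hasSum_cosh √c)).div_const c
  simpa only [hterm, Finset.sum_range_one, mul_zero, pow_zero, Nat.factorial_zero, Nat.cast_one,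
    div_one] using h

end Real

section PowThree

variable {R M : Type*} [Monoid R] [Monoid M] [MulAction R M] [IsScalarTower R M M]
  {a : M} {c : R}

theorem pow_two_mul_add_one_of_pow_three_eq_smul (ha : a ^ 3 = c • a) (m : ℕ) :
    a ^ (2 * m + 1) = c ^ m • a := by
  induction m with
  | zero => simp
  | succ m ih =>
    rw [show 2 * (m + 1) + 1 = 2 * m + 1 + 2 by ring, pow_add, ih, smul_mul_assoc,
      ← pow_succ' a 2, ha, smul_smul, pow_succ]

theorem pow_two_mul_add_two_of_pow_three_eq_smul (ha : a ^ 3 = c • a) (m : ℕ) :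
    a ^ (2 * m + 2) = c ^ m • a ^ 2 := by
  rw [pow_succ, pow_two_mul_add_one_of_pow_three_eq_smul ha, smul_mul_assoc, ← sq]

end PowThree

open Real in
theorem NormedSpace.exp_eq_of_pow_three_eq_smul {𝔸 : Type*} [Ring 𝔸] [Algebra ℝ 𝔸]
    [TopologicalSpace 𝔸] [IsTopologicalRing 𝔸] [ContinuousSMul ℝ 𝔸] [T2Space 𝔸]
    {a : 𝔸} {c : ℝ} (hc : 0 < c) (ha : a ^ 3 = c • a) :
    NormedSpace.exp a = 1 + (sinh √c / √c) • a + ((cosh √c - 1) / c) • a ^ 2 := by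
  have hodd : HasSum (fun m : ℕ => ((2 * m + 1)! : ℝ)⁻¹ • a ^ (2 * m + 1))
      ((sinh √c / √c) • a) := by
    simpa only [pow_two_mul_add_one_of_pow_three_eq_smul ha, smul_smul, inv_mul_eq_div] using
      (hasSum_sinh_sqrt_div_sqrt hc).smul_const a
  have heven : HasSum (fun m : ℕ => ((2 * m + 2)! : ℝ)⁻¹ • a ^ (2 * m + 2))
      (((cosh √c - 1) / c) • a ^ 2) := by
    simpa only [pow_two_mul_add_two_of_pow_three_eq_smul ha, smul_smul, inv_mul_eq_div] using
      (hasSum_cosh_sqrt_sub_one_div hc).smul_const (a ^ 2)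
  have htail : HasSum (fun k : ℕ => ((k + 1)! : ℝ)⁻¹ • a ^ (k + 1))
      ((sinh √c / √c) • a + ((cosh √c - 1) / c) • a ^ 2) :=
    hodd.even_add_odd heven
  rw [NormedSpace.exp_eq_tsum ℝ, add_assoc]
  refine ((hasSum_nat_add_iff' 1).1 ?_).tsum_eq
  simpa using htail

theorem starAdj_sq_apply {n : ℕ} (p q : Fin n) :
    (starAdj n ^ 2) p q =
      if p.1 = 0 then (if q.1 = 0 then (n : ℝ) - 1 else 0) else (if q.1 = 0 then 0 else 1) := by
  obtain _ | m := n
  · exact p.elim0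
  rw [sq, mul_apply, Fin.sum_univ_succ]
  by_cases hp : p = 0 <;> by_cases hq : q = 0 <;> simp [starAdj, hp, hq]

theorem starAdj_pow_three (n : ℕ) : starAdj n ^ 3 = ((n : ℝ) - 1) • starAdj n := by
  ext p q
  obtain _ | m := n
  · exact p.elim0
  rw [pow_succ, mul_apply, Fin.sum_univ_succ, Matrix.smul_apply]
  simp only [starAdj_sq_apply]
  by_cases hp : p = 0 <;> by_cases hq : q = 0 <;> simp [starAdj, hp, hq]

/-- For the star graph `K_{1,n−1}` on `n ≥ 3` vertices with hub vertex `1`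
(index `0`), the entries of `G = e^A` are: `G_{11} = cosh √(n−1)`;
`G_{1q} = G_{q1} = sinh(√(n−1))/√(n−1)` for `q ≠ 1`;
`G_{pp} = (cosh √(n−1) + n − 2)/(n−1)` for `p ≠ 1`; and
`G_{pq} = (cosh √(n−1) − 1)/(n−1)` for distinct `p, q ≠ 1`. -/
theorem star_graph_communicability (n : ℕ) (hn : 3 ≤ n) :
    (∀ p : Fin n, p.1 = 0 →
      NormedSpace.exp (starAdj n) p p = Real.cosh (Real.sqrt ((n : ℝ) - 1))) ∧
    (∀ p q : Fin n, p.1 = 0 → q.1 ≠ 0 →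
      NormedSpace.exp (starAdj n) p q
          = Real.sinh (Real.sqrt ((n : ℝ) - 1)) / Real.sqrt ((n : ℝ) - 1) ∧
      NormedSpace.exp (starAdj n) q p
          = Real.sinh (Real.sqrt ((n : ℝ) - 1)) / Real.sqrt ((n : ℝ) - 1)) ∧
    (∀ p : Fin n, p.1 ≠ 0 →
      NormedSpace.exp (starAdj n) p p
          = (Real.cosh (Real.sqrt ((n : ℝ) - 1)) + (n : ℝ) - 2) / ((n : ℝ) - 1)) ∧
    (∀ p q : Fin n, p.1 ≠ 0 → q.1 ≠ 0 → p ≠ q →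
      NormedSpace.exp (starAdj n) p q
          = (Real.cosh (Real.sqrt ((n : ℝ) - 1)) - 1) / ((n : ℝ) - 1)) := by
  have hc : (0 : ℝ) < n - 1 := sub_pos.2 (by exact_mod_cast (by omega : 1 < n))
  rw [NormedSpace.exp_eq_of_pow_three_eq_smul hc (starAdj_pow_three n)]
  refine ⟨fun p hp => ?_, fun p q hp hq => ?_, fun p hp => ?_, fun p q hp hq hpq => ?_⟩
  all_goals simp only [Matrix.add_apply, Matrix.smul_apply, Matrix.one_apply, starAdj_sq_apply,
    smul_eq_mul]
  · simp [starAdj, hp, hc.ne']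
  · have hqp : q ≠ p := fun h => hq (h ▸ hp)
    simp [starAdj, hp, hq, hqp, hqp.symm]
  · simp [starAdj, hp]
    field_simp
    ring
  · simp [starAdj, hp, hq, hpq]
end

section
/- Let A be the adjacency matrix of a simple connected graph on n ≥ 2 vertices and, for β > 0, define cos θ_{pq}(β) = (e^{βA})_{pq} / √( (e^{βA})_{pp} (e^{βA})_{qq} ). Then for every pair of vertices p, q, lim_{β→∞} cos θ_{pq}(β) = 1; that is, as the inverse temperature tends to infinity every communicability angle tends to 0°. -/
/-!
Diagonalising, `e^(βA) = Σ_k e^(βλ_k) v_k v_kᵀ`. For the top eigenvalue `μ` the matrix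
`μ • 1 - A` is positive semidefinite, and as `A ≥ 0` the vector `|x|` does at least as well as `x`
in the quadratic form, so `|x|` is a top eigenvector whenever `x` is. On a connected graph a
nonnegative eigenvector of the adjacency matrix that vanishes somewhere vanishes everywhere, so top
eigenvectors have no zero entries; hence the top eigenspace is a line spanned by a vector `v` of
constant sign (Perron–Frobenius). Therefore `e^(-βμ) e^(βA) → v vᵀ`, and the cosine, which is
invariant under positive scaling of the matrix, tends to `v_p v_q / |v_p v_q| = 1`.
-/

open Matrix Filter Topology

theorem tendsto_sum_exp_mul_sub_smul {ι E : Type*} [Fintype ι] [DecidableEq ι] [AddCommMonoid E]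
    [TopologicalSpace E] [ContinuousAdd E] [Module ℝ E] [ContinuousSMul ℝ E] {d : ι → ℝ} {k₀ : ι}
    (hd : ∀ k ≠ k₀, d k < d k₀) (c : ι → E) :
    Tendsto (fun β : ℝ => ∑ k, Real.exp (β * (d k - d k₀)) • c k) atTop (𝓝 (c k₀)) := by
  rw [← Fintype.sum_ite_eq' k₀ c]
  refine tendsto_finsetSum _ fun k _ => ?_
  split_ifs with hk
  · subst hk
    simpa using tendsto_const_nhds
  · have h : Tendsto (fun β : ℝ => β * (d k - d k₀)) atTop atBot :=
      tendsto_id.atTop_mul_const_of_neg (sub_neg.2 (hd k hk))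
    simpa using (Real.tendsto_exp_atBot.comp h).smul_const (c k)

namespace Matrix
variable {ι : Type*}

noncomputable def cosAngle (M : Matrix ι ι ℝ) (p q : ι) : ℝ := M p q / √(M p p * M q q)

theorem cosAngle_smul {c : ℝ} (hc : 0 < c) (M : Matrix ι ι ℝ) (p q : ι) :
    cosAngle (c • M) p q = cosAngle M p q := by
  simp only [cosAngle, smul_apply, smul_eq_mul]
  rw [mul_mul_mul_comm, Real.sqrt_mul (mul_self_nonneg c), Real.sqrt_mul_self hc.le,
    mul_div_mul_left _ _ hc.ne']

theorem cosAngle_vecMulVec_self {u : ι → ℝ} {p q : ι} (h : 0 < u p * u q) :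
    cosAngle (vecMulVec u u) p q = 1 := by
  simp only [cosAngle, vecMulVec_apply]
  rw [mul_mul_mul_comm, Real.sqrt_mul_self h.le, div_self h.ne']

theorem _root_.Filter.Tendsto.cosAngle {α : Type*} {l : Filter α} {M : α → Matrix ι ι ℝ}
    {M₀ : Matrix ι ι ℝ} (h : Tendsto M l (𝓝 M₀)) {p q : ι} (h₀ : 0 < M₀ p p * M₀ q q) :
    Tendsto (fun a => cosAngle (M a) p q) l (𝓝 (cosAngle M₀ p q)) := by
  have hentry : ∀ i j, Tendsto (fun a => M a i j) l (𝓝 (M₀ i j)) := fun i j =>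
    tendsto_pi_nhds.1 (tendsto_pi_nhds.1 h i) j
  exact (hentry p q).div (((hentry p p).mul (hentry q q)).sqrt) (Real.sqrt_pos.2 h₀).ne'

section Fintype
variable [Fintype ι]

theorem dotProduct_mulVec_le_abs {R : Type*} [CommRing R] [LinearOrder R] [IsStrictOrderedRing R]
    {A : Matrix ι ι R} (hA : ∀ i j, 0 ≤ A i j) (x : ι → R) :
    x ⬝ᵥ A *ᵥ x ≤ |x| ⬝ᵥ A *ᵥ |x| := by
  simp only [dotProduct, mulVec, Finset.mul_sum, Pi.abs_apply]
  refine Finset.sum_le_sum fun i _ => Finset.sum_le_sum fun j _ => ?_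
  calc x i * (A i j * x j) ≤ |x i * (A i j * x j)| := le_abs_self _
    _ = |x i| * (A i j * |x j|) := by rw [abs_mul, abs_mul, abs_of_nonneg (hA i j)]

variable [DecidableEq ι]

theorem mul_diagonal_mul_eq_sum_vecMulVec {R : Type*} [CommSemiring R]
    (M N : Matrix ι ι R) (w : ι → R) :
    M * diagonal w * N = ∑ k, w k • vecMulVec (fun i => M i k) (N k) := by
  ext i j
  rw [mul_apply]
  simp only [mul_diagonal, sum_apply, smul_apply, vecMulVec_apply, smul_eq_mul]
  exact Finset.sum_congr rfl fun k _ => by ring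

theorem exp_unitary_mul_diagonal_mul_star {𝕜 : Type*} [RCLike 𝕜] (U : unitaryGroup ι 𝕜)
    (d : ι → ℝ) :
    NormedSpace.exp
        ((U : Matrix ι ι 𝕜) * diagonal (fun k => (d k : 𝕜)) * star (U : Matrix ι ι 𝕜)) =
      U * diagonal (fun k => (Real.exp (d k) : 𝕜)) * star (U : Matrix ι ι 𝕜) := by
  have := exp_units_conj (Unitary.toUnits U) (diagonal fun k => (d k : 𝕜))
  simp only [Unitary.val_toUnits_apply, Unitary.val_inv_toUnits_apply, ← Unitary.star_eq_inv,
    Unitary.coe_star] at this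
  rw [this, exp_diagonal]
  congr
  funext k
  simpa [Real.exp_eq_exp_ℝ] using (NormedSpace.algebraMap_exp_comm (𝔸 := 𝕜) (d k)).symm

open scoped ComplexOrder in
theorem IsHermitian.posSemidef_smul_one_sub {𝕜 : Type*} [RCLike 𝕜] {A : Matrix ι ι 𝕜}
    (hA : A.IsHermitian) {μ : ℝ} (hμ : ∀ k, hA.eigenvalues k ≤ μ) :
    (μ • 1 - A).PosSemidef := by
  have hconj : μ • 1 - A = (hA.eigenvectorUnitary : Matrix ι ι 𝕜) *
      diagonal (fun k => ((μ - hA.eigenvalues k : ℝ) : 𝕜)) *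
      (hA.eigenvectorUnitary : Matrix ι ι 𝕜)ᴴ := by
    conv_lhs => rw [hA.spectral_theorem, Unitary.conjStarAlgAut_apply]
    have hdiag : diagonal (fun k => ((μ - hA.eigenvalues k : ℝ) : 𝕜)) =
        μ • 1 - diagonal (RCLike.ofReal ∘ hA.eigenvalues) := by
      ext i j
      by_cases h : i = j <;> simp [h, RCLike.real_smul_eq_coe_mul]
    rw [hdiag, mul_sub, sub_mul, mul_smul_comm, mul_one, smul_mul_assoc, ← star_eq_conjTranspose,
      Unitary.mul_star_self_of_mem hA.eigenvectorUnitary.2]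
  rw [hconj]
  exact (PosSemidef.diagonal fun k => by simpa using hμ k).mul_mul_conjTranspose_same _

theorem mulVec_abs_eq_smul {A : Matrix ι ι ℝ} (hA : ∀ i j, 0 ≤ A i j) {μ : ℝ}
    (hμ : (μ • 1 - A).PosSemidef) {x : ι → ℝ} (hx : A *ᵥ x = μ • x) :
    A *ᵥ |x| = μ • |x| := by
  have hform : ∀ y : ι → ℝ, y ⬝ᵥ (μ • 1 - A) *ᵥ y = μ * (y ⬝ᵥ y) - y ⬝ᵥ A *ᵥ y := fun y => by
    rw [sub_mulVec, smul_mulVec, one_mulVec, dotProduct_sub, dotProduct_smul, smul_eq_mul]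
  have habs : |x| ⬝ᵥ |x| = x ⬝ᵥ x := by simp only [dotProduct, Pi.abs_apply, abs_mul_abs_self]
  have hzero : |x| ⬝ᵥ (μ • 1 - A) *ᵥ |x| = 0 := by
    refine le_antisymm ?_ (by simpa using hμ.dotProduct_mulVec_nonneg |x|)
    have hx0 : x ⬝ᵥ (μ • 1 - A) *ᵥ x = 0 := by
      rw [hform, hx, dotProduct_smul, smul_eq_mul, sub_self]
    rw [← hx0, hform, hform, habs]
    linarith [dotProduct_mulVec_le_abs hA x]
  have := (hμ.dotProduct_mulVec_zero_iff |x|).1 (by simpa using hzero)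
  rwa [sub_mulVec, smul_mulVec, one_mulVec, sub_eq_zero, eq_comm] at this

namespace IsHermitian
variable {𝕜 : Type*} [RCLike 𝕜] {A : Matrix ι ι 𝕜}

theorem smul_eq_unitary_mul_diagonal_mul_star (hA : A.IsHermitian) (β : ℝ) :
    β • A = (hA.eigenvectorUnitary : Matrix ι ι 𝕜) *
      diagonal (fun k => ((β * hA.eigenvalues k : ℝ) : 𝕜)) *
      star (hA.eigenvectorUnitary : Matrix ι ι 𝕜) := by
  conv_lhs => rw [hA.spectral_theorem, Unitary.conjStarAlgAut_apply]
  rw [← smul_mul_assoc, ← mul_smul_comm, ← diagonal_smul]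
  congr 3
  funext k
  simp [RCLike.real_smul_eq_coe_mul]

theorem exp_smul_eq_sum (hA : A.IsHermitian) (β : ℝ) :
    NormedSpace.exp (β • A) = ∑ k, Real.exp (β * hA.eigenvalues k) •
      vecMulVec ⇑(hA.eigenvectorBasis k) (star ⇑(hA.eigenvectorBasis k)) := by
  rw [hA.smul_eq_unitary_mul_diagonal_mul_star, exp_unitary_mul_diagonal_mul_star,
    mul_diagonal_mul_eq_sum_vecMulVec]
  refine Finset.sum_congr rfl fun k _ => ?_
  rw [RCLike.real_smul_eq_coe_smul (K := 𝕜)]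
  congr 2

theorem tendsto_exp_neg_mul_smul_exp_smul (hA : A.IsHermitian) {k₀ : ι}
    (h : ∀ k ≠ k₀, hA.eigenvalues k < hA.eigenvalues k₀) :
    Tendsto (fun β : ℝ => Real.exp (-(β * hA.eigenvalues k₀)) • NormedSpace.exp (β • A)) atTop
      (𝓝 (vecMulVec ⇑(hA.eigenvectorBasis k₀) (star ⇑(hA.eigenvectorBasis k₀)))) := by
  have hsum : ∀ β : ℝ, Real.exp (-(β * hA.eigenvalues k₀)) • NormedSpace.exp (β • A) =
      ∑ k, Real.exp (β * (hA.eigenvalues k - hA.eigenvalues k₀)) •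
        vecMulVec ⇑(hA.eigenvectorBasis k) (star ⇑(hA.eigenvectorBasis k)) := fun β => by
    rw [hA.exp_smul_eq_sum, Finset.smul_sum]
    refine Finset.sum_congr rfl fun k _ => ?_
    rw [smul_smul, ← Real.exp_add, mul_sub, neg_add_eq_sub]
  simpa only [hsum] using tendsto_sum_exp_mul_sub_smul h _

end IsHermitian
end Fintype
end Matrix

namespace SimpleGraph
variable {ι : Type*} {G : SimpleGraph ι}

theorem Reachable.induction_of_adj {P : ι → Prop} (hP : ∀ a b, G.Adj a b → P a → P b)
    {a b : ι} (h : G.Reachable a b) (ha : P a) : P b := by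
  obtain ⟨w⟩ := h
  induction w with
  | nil => exact ha
  | cons hadj _ ih => exact ih (hP _ _ hadj ha)

variable [DecidableRel G.Adj]

theorem adjMatrix_nonneg {R : Type*} [Zero R] [One R] [Preorder R] [ZeroLEOneClass R] (i j : ι) :
    0 ≤ G.adjMatrix R i j := by
  rw [adjMatrix_apply]
  split_ifs
  exacts [zero_le_one, le_rfl]

variable [Fintype ι]

theorem Connected.pos_of_adjMatrix_mulVec_eq_smul {R : Type*} [CommRing R] [LinearOrder R]
    [IsStrictOrderedRing R] (hG : G.Connected) {μ : R} {y : ι → R} (hy : 0 ≤ y) (hy₀ : y ≠ 0)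
    (h : G.adjMatrix R *ᵥ y = μ • y) (i : ι) : 0 < y i := by
  refine (hy i).lt_of_ne' fun hi => hy₀ (funext fun j => ?_)
  refine (hG.preconnected i j).induction_of_adj (P := fun k => y k = 0) (fun a b hab ha => ?_) hi
  have hsum : ∑ c ∈ G.neighborFinset a, y c = 0 := by
    rw [← adjMatrix_mulVec_apply, h, Pi.smul_apply, ha, smul_zero]
  exact (Finset.sum_eq_zero_iff_of_nonneg fun c _ => hy c).1 hsum b
    ((mem_neighborFinset _ _ _).2 hab)

variable [DecidableEq ι]

section TopEigenvector
variable (hG : G.Connected) {μ : ℝ} (hμ : (μ • 1 - G.adjMatrix ℝ).PosSemidef) {x y : ι → ℝ}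
include hG hμ

theorem Connected.apply_ne_zero_of_adjMatrix_mulVec_eq_smul (hx : G.adjMatrix ℝ *ᵥ x = μ • x)
    (hx₀ : x ≠ 0) (i : ι) : x i ≠ 0 := by
  have habs := mulVec_abs_eq_smul adjMatrix_nonneg hμ hx
  have hpos := hG.pos_of_adjMatrix_mulVec_eq_smul (abs_nonneg x) (by simpa using hx₀) habs i
  exact abs_pos.1 hpos

theorem Connected.eq_smul_of_adjMatrix_mulVec_eq_smul (hx : G.adjMatrix ℝ *ᵥ x = μ • x)
    (hx₀ : x ≠ 0) (hy : G.adjMatrix ℝ *ᵥ y = μ • y) : ∃ c : ℝ, y = c • x := by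
  obtain ⟨i, hi⟩ := Function.ne_iff.1 hx₀
  refine ⟨y i / x i, of_not_not fun hne => ?_⟩
  have hz : G.adjMatrix ℝ *ᵥ (y - (y i / x i) • x) = μ • (y - (y i / x i) • x) := by
    rw [mulVec_sub, mulVec_smul, hx, hy, smul_sub, smul_comm]
  refine hG.apply_ne_zero_of_adjMatrix_mulVec_eq_smul hμ hz (sub_ne_zero.2 hne) i ?_
  simp [div_mul_cancel₀ _ hi]

theorem Connected.mul_pos_of_adjMatrix_mulVec_eq_smul (hx : G.adjMatrix ℝ *ᵥ x = μ • x)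
    (hx₀ : x ≠ 0) (i j : ι) : 0 < x i * x j := by
  obtain ⟨c, hc⟩ := hG.eq_smul_of_adjMatrix_mulVec_eq_smul hμ hx hx₀
    (mulVec_abs_eq_smul adjMatrix_nonneg hμ hx)
  have hpos : ∀ k, 0 < c * x k := fun k => by
    rw [← smul_eq_mul, ← Pi.smul_apply, ← hc, Pi.abs_apply, abs_pos]
    exact hG.apply_ne_zero_of_adjMatrix_mulVec_eq_smul hμ hx hx₀ k
  have := mul_pos (hpos i) (hpos j)
  rw [mul_mul_mul_comm] at this
  exact pos_of_mul_pos_right this (mul_self_nonneg c)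

end TopEigenvector

theorem Connected.exists_eigenvalues_lt_and_eigenvectorBasis_mul_pos (hG : G.Connected)
    (hA : (G.adjMatrix ℝ).IsHermitian) :
    ∃ k₀, (∀ k ≠ k₀, hA.eigenvalues k < hA.eigenvalues k₀) ∧
      ∀ i j, 0 < hA.eigenvectorBasis k₀ i * hA.eigenvectorBasis k₀ j := by
  have := hG.nonempty
  set v := hA.eigenvectorBasis
  obtain ⟨k₀, -, hmax⟩ := Finset.univ.exists_max_image hA.eigenvalues Finset.univ_nonempty
  have hμ := hA.posSemidef_smul_one_sub fun k => hmax k (Finset.mem_univ k)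
  have hv₀ : ⇑(v k₀) ≠ 0 := fun h => v.orthonormal.ne_zero k₀ (WithLp.ofLp_injective 2 h)
  refine ⟨k₀, fun k hk => (hmax k (Finset.mem_univ k)).lt_of_ne fun heq => ?_,
    hG.mul_pos_of_adjMatrix_mulVec_eq_smul hμ (hA.mulVec_eigenvectorBasis k₀) hv₀⟩
  obtain ⟨c, hc⟩ := hG.eq_smul_of_adjMatrix_mulVec_eq_smul hμ (hA.mulVec_eigenvectorBasis k₀) hv₀
    (by rw [hA.mulVec_eigenvectorBasis, heq])
  have hvk : v k = c • v k₀ := WithLp.ofLp_injective 2 (by rw [hc, WithLp.ofLp_smul])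
  have horth := v.inner_eq_ite k k₀
  rw [if_neg hk, hvk, inner_smul_left, v.inner_eq_ite, if_pos rfl, mul_one, conj_trivial] at horth
  exact v.orthonormal.ne_zero k (by rw [hvk, horth, zero_smul])

end SimpleGraph

theorem cos_angle_tendsto_one_of_connected_general
    (n : ℕ) (G : SimpleGraph (Fin n)) [DecidableRel G.Adj]
    (hconn : G.Connected) (p q : Fin n) :
    Tendsto (fun β : ℝ =>
        NormedSpace.exp (β • G.adjMatrix ℝ) p q
          / Real.sqrt (NormedSpace.exp (β • G.adjMatrix ℝ) p p
              * NormedSpace.exp (β • G.adjMatrix ℝ) q q))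
      atTop (𝓝 1) := by
  have hA : (G.adjMatrix ℝ).IsHermitian := isHermitian_iff_isSymm.2 G.isSymm_adjMatrix
  obtain ⟨k₀, hsimple, hpos⟩ := hconn.exists_eigenvalues_lt_and_eigenvectorBasis_mul_pos hA
  have hexp := hA.tendsto_exp_neg_mul_smul_exp_smul hsimple
  rw [star_trivial] at hexp
  have hlim := hexp.cosAngle (p := p) (q := q)
    (by simpa only [vecMulVec_apply] using mul_pos (hpos p p) (hpos q q))
  rw [cosAngle_vecMulVec_self (hpos p q)] at hlim
  exact hlim.congr fun β => cosAngle_smul (Real.exp_pos _) _ p q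

/-- For the adjacency matrix `A` of a simple connected graph on `n ≥ 2`
vertices and `cos θ_{pq}(β) = (e^{βA})_{pq}/√((e^{βA})_{pp}(e^{βA})_{qq})`, every
communicability angle tends to `0°` as the inverse temperature `β` tends to infinity:
`lim_{β→∞} cos θ_{pq}(β) = 1` for all vertices `p, q`. -/
theorem cos_angle_tendsto_one_of_connected
    (n : ℕ) (hn : 2 ≤ n) (G : SimpleGraph (Fin n)) [DecidableRel G.Adj]
    (hconn : G.Connected) (p q : Fin n) :
    Tendsto (fun β : ℝ =>
        NormedSpace.exp (β • G.adjMatrix ℝ) p q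
          / Real.sqrt (NormedSpace.exp (β • G.adjMatrix ℝ) p p
              * NormedSpace.exp (β • G.adjMatrix ℝ) q q))
      atTop (𝓝 1) :=
  cos_angle_tendsto_one_of_connected_general n G hconn p q
end

section
/- Let P_n be the path graph with vertices 1, …, n and adjacency matrix A_n, and for an integer k let I_k(2) = Σ_{m=0}^{∞} 1/(m! · (m+|k|)!). Then the cosine of the communicability angle between the two end vertices of the path tends to zero as the path grows: lim_{n→∞} cos θ_{1n}(P_n) = lim_{n→∞} (I_{n−1}(2) − I_{n+1}(2)) / (I_0(2) − I_2(2)) = 0, where cos θ_{1n}(P_n) = (e^{A_n})_{1n}/√((e^{A_n})_{11}(e^{A_n})_{nn}). Hence the communicability angle attains its upper bound 90° in the limit. -/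
/-!
Since `A_n` is nonnegative, the diagonal entries of `e^{A_n}` are at least `1`, so
`0 ≤ cos θ_{1n} ≤ G_{1n}`. The end vertices are at distance `n - 1`, so `(A_n^k)_{1n} = 0` for
`k < n - 1`, while the row sums of `A_n` are at most `2`, so `(A_n^k)_{1n} ≤ 2^k`. Hence `G_{1n}` is
bounded by the tail `∑_{k ≥ n-1} 2^k/k!` of the series of `e^2`, which tends to `0`.
Likewise `I_k(2) ≤ e/|k|!` because `|k|! ≤ (m+|k|)!`, so `I_{n∓1}(2) → 0`.
-/

open Matrix Filter Topology

/-- The cosine of the communicability angle `cos θ_{pq}(P_n) = G_{pq}/√(G_{pp} G_{qq})`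
of the path graph `P_n`. -/
noncomputable def pathCos (n p q : ℕ) : ℝ :=
  pathComm n p q / Real.sqrt (pathComm n p p * pathComm n q q)

open scoped Nat
open Finset

namespace Matrix

variable {ι : Type*} [Fintype ι] [DecidableEq ι]

theorem hasSum_exp_apply_s18 (A : Matrix ι ι ℝ) (i j : ι) :
    HasSum (fun k : ℕ => (A ^ k) i j / k !) (NormedSpace.exp A i j) := by
  -- any Banach-algebra norm will do: it induces the entrywise topology
  let := Matrix.linftyOpNormedRing (n := ι) (α := ℝ)
  let := Matrix.linftyOpNormedAlgebra (n := ι) (R := ℝ) (α := ℝ)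
  have h := Pi.hasSum.mp (Pi.hasSum.mp (NormedSpace.exp_series_hasSum_exp' (𝕂 := ℝ) A) i) j
  simp only [smul_apply, smul_eq_mul] at h
  simp only [div_eq_inv_mul]
  exact h

theorem exp_apply_nonneg {A : Matrix ι ι ℝ} (hA : ∀ i j, 0 ≤ A i j) (i j : ι) :
    0 ≤ NormedSpace.exp A i j :=
  (hasSum_exp_apply_s18 A i j).nonneg fun k => div_nonneg (pow_apply_nonneg hA k i j) (by positivity)

theorem one_le_exp_apply_self {A : Matrix ι ι ℝ} (hA : ∀ i j, 0 ≤ A i j) (i : ι) :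
    1 ≤ NormedSpace.exp A i i := by
  simpa using le_hasSum (hasSum_exp_apply_s18 A i i) 0
    fun k _ => div_nonneg (pow_apply_nonneg hA k i i) (by positivity)

theorem pow_apply_le_pow_of_sum_le {A : Matrix ι ι ℝ} {c : ℝ} (hA : ∀ i j, 0 ≤ A i j)
    (hc : ∀ i, ∑ j, A i j ≤ c) (k : ℕ) (i j : ι) : (A ^ k) i j ≤ c ^ k := by
  induction k generalizing i with
  | zero => by_cases h : i = j <;> simp [h]
  | succ k ih =>
    calc (A ^ (k + 1)) i j = ∑ l, A i l * (A ^ k) l j := by rw [pow_succ', mul_apply]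
      _ ≤ ∑ l, A i l * c ^ k := by gcongr with l; exacts [hA i l, ih l]
      _ ≤ c * c ^ k := by
        rw [← sum_mul]
        exact mul_le_mul_of_nonneg_right (hc i) ((pow_apply_nonneg hA k i j).trans (ih i))
      _ = c ^ (k + 1) := (pow_succ' c k).symm

theorem exp_apply_le_tsum_of_pow_apply_eq_zero {A : Matrix ι ι ℝ} {c : ℝ} (hA : ∀ i j, 0 ≤ A i j)
    (hc : ∀ i, ∑ j, A i j ≤ c) {m : ℕ} {i j : ι} (hm : ∀ k < m, (A ^ k) i j = 0) :
    NormedSpace.exp A i j ≤ ∑' k : ℕ, c ^ (k + m) / (k + m)! := by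
  have hhead : ∑ k ∈ range m, (A ^ k) i j / k ! = 0 :=
    sum_eq_zero fun k hk => by rw [hm k (mem_range.mp hk), zero_div]
  have htail := (hasSum_nat_add_iff' m).mpr (hasSum_exp_apply_s18 A i j)
  rw [hhead, sub_zero] at htail
  refine hasSum_le (fun k => ?_) htail
    ((Real.summable_pow_div_factorial c).comp_injective (add_left_injective m)).hasSum
  exact div_le_div_of_nonneg_right (pow_apply_le_pow_of_sum_le hA hc _ i j) (by positivity)

end Matrix

theorem pathAdj_nonneg (n : ℕ) (p q : Fin n) : 0 ≤ pathAdj n p q := by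
  simp only [pathAdj, of_apply]; split_ifs <;> norm_num

theorem sum_pathAdj_le_two (n : ℕ) (p : Fin n) : ∑ q, pathAdj n p q ≤ 2 := by
  let nbrs := univ.filter fun q : Fin n => p.1 + 1 = q.1 ∨ q.1 + 1 = p.1
  have hsub : nbrs.map Fin.valEmbedding ⊆ {p.1 + 1, p.1 - 1} := by
    intro x hx
    simp only [nbrs, Finset.mem_map, mem_filter, mem_univ, true_and, Fin.valEmbedding_apply] at hx
    obtain ⟨q, hq, rfl⟩ := hx
    simp only [mem_insert, mem_singleton]
    omega
  calc ∑ q, pathAdj n p q = #nbrs := by simp [pathAdj, nbrs, sum_boole]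
    _ ≤ #{p.1 + 1, p.1 - 1} := by rw [← card_map]; exact_mod_cast card_le_card hsub
    _ ≤ 2 := by exact_mod_cast card_le_two

theorem pathAdj_pow_apply_eq_zero {n k : ℕ} {p q : Fin n} (h : p.1 + k < q.1) :
    (pathAdj n ^ k) p q = 0 := by
  induction k generalizing p with
  | zero => exact one_apply_ne (by rintro rfl; omega)
  | succ k ih =>
    rw [pow_succ', mul_apply]
    refine sum_eq_zero fun r _ => ?_
    by_cases hpr : p.1 + 1 = r.1 ∨ r.1 + 1 = p.1
    · rw [ih (by omega), mul_zero]
    · simp [pathAdj, hpr]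

theorem pathComm_nonneg (n p q : ℕ) : 0 ≤ pathComm n p q := by
  unfold pathComm
  split_ifs
  exacts [exp_apply_nonneg (pathAdj_nonneg n) _ _, le_rfl, le_rfl]

theorem one_le_pathComm_self {n p : ℕ} (hp : p - 1 < n) : 1 ≤ pathComm n p p := by
  simpa [pathComm, hp] using one_le_exp_apply_self (pathAdj_nonneg n) _

theorem pathCos_le_pathComm {n p q : ℕ} (hp : p - 1 < n) (hq : q - 1 < n) :
    pathCos n p q ≤ pathComm n p q := by
  refine div_le_self (pathComm_nonneg n p q) ?_
  rw [Real.one_le_sqrt]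
  exact one_le_mul_of_one_le_of_one_le (one_le_pathComm_self hp) (one_le_pathComm_self hq)

/-- The end vertices of `P_n` are at distance `n - 1`, so only walks of length `≥ n - 1`,
at most `2 ^ k` of length `k`, contribute. -/
theorem pathComm_endpoints_le {n : ℕ} (hn : 0 < n) :
    pathComm n 1 n ≤ ∑' k : ℕ, (2 : ℝ) ^ (k + (n - 1)) / (k + (n - 1))! := by
  have hlast : n - 1 < n := Nat.sub_lt hn one_pos
  simp only [pathComm, Nat.sub_self, hn, hlast, dite_true]
  exact exp_apply_le_tsum_of_pow_apply_eq_zero (pathAdj_nonneg n) (sum_pathAdj_le_two n)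
    fun k hk => pathAdj_pow_apply_eq_zero (by simpa using hk)

theorem tendsto_pathCos_endpoints : Tendsto (fun n : ℕ => pathCos n 1 n) atTop (𝓝 0) := by
  have htail : Tendsto (fun n : ℕ => ∑' k : ℕ, (2 : ℝ) ^ (k + (n - 1)) / (k + (n - 1))!)
      atTop (𝓝 0) :=
    (tendsto_sum_nat_add fun k => (2 : ℝ) ^ k / k !).comp (tendsto_sub_atTop_nat 1)
  refine squeeze_zero' (Eventually.of_forall fun n => ?_) ?_ htail
  · exact div_nonneg (pathComm_nonneg n 1 n) (Real.sqrt_nonneg _)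
  · filter_upwards [eventually_gt_atTop 0] with n hn
    exact (pathCos_le_pathComm (by omega) (by omega)).trans (pathComm_endpoints_le hn)

theorem besselI2_le (k : ℤ) : besselI2 k ≤ Real.exp 1 / k.natAbs ! := by
  have hexp : HasSum (fun m : ℕ => 1 / (m ! : ℝ) / k.natAbs !) (Real.exp 1 / k.natAbs !) := by
    simpa [Real.exp_eq_exp_ℝ] using (NormedSpace.expSeries_div_hasSum_exp (1 : ℝ)).div_const _
  have hterm (m : ℕ) :
      1 / ((m ! : ℝ) * (m + k.natAbs)!) ≤ 1 / (m ! : ℝ) / k.natAbs ! := by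
    rw [div_div]
    gcongr
    exact Nat.le_add_left _ _
  exact hasSum_le hterm
    (hexp.summable.of_nonneg_of_le (fun m => by positivity) hterm).hasSum hexp

theorem besselI2_nonneg (k : ℤ) : 0 ≤ besselI2 k :=
  tsum_nonneg fun m => by positivity

theorem tendsto_besselI2_atTop : Tendsto besselI2 atTop (𝓝 0) := by
  have hnatAbs : Tendsto Int.natAbs atTop atTop :=
    tendsto_atTop_atTop.mpr fun b => ⟨b, fun k hk => by omega⟩
  have hfac : Tendsto (fun j : ℕ => (j ! : ℝ)) atTop atTop :=
    tendsto_natCast_atTop_atTop.comp (tendsto_atTop_mono Nat.self_le_factorial tendsto_id)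
  exact squeeze_zero besselI2_nonneg besselI2_le
    (tendsto_const_nhds.div_atTop (hfac.comp hnatAbs))

theorem tendsto_besselI2_sub_div : Tendsto (fun n : ℕ =>
      (besselI2 ((n : ℤ) - 1) - besselI2 ((n : ℤ) + 1)) / (besselI2 0 - besselI2 2))
    atTop (𝓝 0) := by
  have hshift (a : ℤ) : Tendsto (fun n : ℕ => besselI2 ((n : ℤ) + a)) atTop (𝓝 0) :=
    tendsto_besselI2_atTop.comp (tendsto_atTop_add_const_right _ a tendsto_natCast_atTop_atTop)
  simpa [sub_eq_add_neg] using ((hshift (-1)).sub (hshift 1)).div_const (besselI2 0 - besselI2 2)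

/-- The cosine of the communicability angle between the two end vertices
of the path graph `P_n` tends to `0` as `n → ∞`:
`lim_{n→∞} cos θ_{1n}(P_n) = lim_{n→∞} (I_{n−1}(2) − I_{n+1}(2))/(I_0(2) − I_2(2)) = 0`.
Hence the communicability angle attains its upper bound `90°` in the limit. -/
theorem path_graph_end_to_end_angle_limit :
    Tendsto (fun n : ℕ => pathCos n 1 n) atTop (𝓝 0) ∧
    Tendsto (fun n : ℕ =>
        (besselI2 ((n : ℤ) - 1) - besselI2 ((n : ℤ) + 1)) / (besselI2 0 - besselI2 2))
      atTop (𝓝 0) :=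
  ⟨tendsto_pathCos_endpoints, tendsto_besselI2_sub_div⟩
end
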